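/- arXiv:2307.09687 — 5 statements merged into one kernel-verified Lean document; each statement's English description precedes it below -/
import Mathlib

section
/- Let A, B be real constants with 0 < A < B and let W be the Flory–Huggins potential. Then for all x, y in the open interval (−1,1), the Taylor-type inequality W'(x)·(x − y) ≥ W(x) − W(y) − ((B−A)/2)·(x − y)² holds. -/
/-!
Writing `mixingEntropy r = (1 + r) log (1 + r) + (1 - r) log (1 - r)`, we have
`W r + (B - A) / 2 * r² = A / 2 * (mixingEntropy r - r²)`. Since
`mixingEntropy'' r = 2 / (1 - r²) ≥ 2`, this function is convex on `(-1, 1)`, and the inequality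
is its tangent-line inequality at `x`, rewritten in terms of `W`.
-/

open Real Set

lemma ConvexOn.sub_le_mul_sub_of_hasDerivAt {S : Set ℝ} {f : ℝ → ℝ} {f' x y : ℝ}
    (hf : ConvexOn ℝ S f) (hx : x ∈ S) (hy : y ∈ S) (hfx : HasDerivAt f f' x) :
    f x - f y ≤ f' * (x - y) := by
  rcases lt_trichotomy x y with hxy | rfl | hyx
  · have h := hf.le_slope_of_hasDerivAt hx hy hxy hfx
    rw [slope_def_field, le_div_iff₀ (sub_pos.2 hxy)] at h
    linarith
  · simp
  · have h := hf.slope_le_of_hasDerivAt hy hx hyx hfx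
    rw [slope_def_field, div_le_iff₀ (sub_pos.2 hyx)] at h
    linarith

noncomputable def mixingEntropy (r : ℝ) : ℝ :=
  (1 + r) * log (1 + r) + (1 - r) * log (1 - r)

lemma hasDerivAt_mixingEntropy_sub_sq {x : ℝ} (hx : x ∈ Ioo (-1 : ℝ) 1) :
    HasDerivAt (fun r ↦ mixingEntropy r - r ^ 2) (log (1 + x) - log (1 - x) - 2 * x) x := by
  have hplus := (hasDerivAt_mul_log (by linarith [hx.1] : 1 + x ≠ 0)).comp_const_add 1 x
  have hminus := (hasDerivAt_mul_log (by linarith [hx.2] : 1 - x ≠ 0)).comp_const_sub 1 x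
  refine ((hplus.add hminus).sub (hasDerivAt_pow 2 x)).congr_deriv ?_
  push_cast
  ring

lemma hasDerivAt_log_one_add_sub_log_one_sub {x : ℝ} (hx : x ∈ Ioo (-1 : ℝ) 1) :
    HasDerivAt (fun r ↦ log (1 + r) - log (1 - r)) (2 / (1 - x ^ 2)) x := by
  have h₁ : 1 + x ≠ 0 := by linarith [hx.1]
  have h₂ : 1 - x ≠ 0 := by linarith [hx.2]
  have hplus := ((hasDerivAt_id' x).const_add 1).log h₁
  have hminus := ((hasDerivAt_id' x).const_sub 1).log h₂
  have h₃ : 1 - x ^ 2 ≠ 0 := by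
    rw [show 1 - x ^ 2 = (1 + x) * (1 - x) by ring]
    exact mul_ne_zero h₁ h₂
  refine (hplus.sub hminus).congr_deriv ?_
  field_simp
  ring

lemma convexOn_mixingEntropy_sub_sq :
    ConvexOn ℝ (Ioo (-1 : ℝ) 1) (fun r ↦ mixingEntropy r - r ^ 2) := by
  refine convexOn_of_hasDerivWithinAt2_nonneg (convex_Ioo _ _)
    (f' := fun r ↦ log (1 + r) - log (1 - r) - 2 * r) (f'' := fun r ↦ 2 / (1 - r ^ 2) - 2)
    (fun x hx ↦ (hasDerivAt_mixingEntropy_sub_sq hx).continuousAt.continuousWithinAt)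
    ?_ ?_ ?_ <;> rw [interior_Ioo] <;> intro x hx
  · exact (hasDerivAt_mixingEntropy_sub_sq hx).hasDerivWithinAt
  · exact ((hasDerivAt_log_one_add_sub_log_one_sub hx).sub
      ((hasDerivAt_id' x).const_mul 2)).hasDerivWithinAt.congr_deriv (by ring)
  · have hpos : 0 < 1 - x ^ 2 := by nlinarith [hx.1, hx.2]
    have hle : 1 - x ^ 2 ≤ 1 := by nlinarith
    rw [sub_nonneg, le_div_iff₀ hpos]
    linarith

theorem floryHuggins_taylor_inequality_general (A B : ℝ) (hA : 0 < A)
    (W W' : ℝ → ℝ)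
    (hW : ∀ r, W r = A / 2 * ((1 + r) * Real.log (1 + r) + (1 - r) * Real.log (1 - r))
        - B / 2 * r ^ 2)
    (hW' : ∀ r, W' r = A / 2 * Real.log ((1 + r) / (1 - r)) - B * r) :
    ∀ x ∈ Set.Ioo (-1 : ℝ) 1, ∀ y ∈ Set.Ioo (-1 : ℝ) 1,
      W' x * (x - y) ≥ W x - W y - (B - A) / 2 * (x - y) ^ 2 := by
  intro x hx y hy
  have htangent := convexOn_mixingEntropy_sub_sq.sub_le_mul_sub_of_hasDerivAt hx hy
    (hasDerivAt_mixingEntropy_sub_sq hx)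
  rw [hW, hW, hW', log_div (by linarith [hx.1]) (by linarith [hx.2])]
  simp only [mixingEntropy] at htangent
  linarith [mul_le_mul_of_nonneg_left htangent (half_pos hA).le]

/-- Taylor-type inequality for the Flory–Huggins potential with `0 < A < B`:
`W'(x)·(x - y) ≥ W(x) - W(y) - ((B-A)/2)·(x-y)²` for all `x, y ∈ (-1,1)`. -/
theorem floryHuggins_taylor_inequality (A B : ℝ) (hA : 0 < A) (hAB : A < B)
    (W W' : ℝ → ℝ)
    (hW : ∀ r, W r = A / 2 * ((1 + r) * Real.log (1 + r) + (1 - r) * Real.log (1 - r))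
        - B / 2 * r ^ 2)
    (hW' : ∀ r, W' r = A / 2 * Real.log ((1 + r) / (1 - r)) - B * r) :
    ∀ x ∈ Set.Ioo (-1 : ℝ) 1, ∀ y ∈ Set.Ioo (-1 : ℝ) 1,
      W' x * (x - y) ≥ W x - W y - (B - A) / 2 * (x - y) ^ 2 :=
  floryHuggins_taylor_inequality_general A B hA W W' hW hW'
end

section
/- Let n ≥ 1 and let u : ℝⁿ → ℝⁿ be a continuously differentiable map with compact support, with components u₁, …, uₙ and partial derivatives ∂ᵢuⱼ. Then the Korn identity 2·∫_{ℝⁿ} Σᵢⱼ (½·(∂ᵢuⱼ(x) + ∂ⱼuᵢ(x)))² dx = ∫_{ℝⁿ} Σᵢⱼ (∂ᵢuⱼ(x))² dx + ∫_{ℝⁿ} (Σᵢ ∂ᵢuᵢ(x))² dx holds. In particular, if the divergence Σᵢ ∂ᵢuᵢ vanishes identically, then ∫_{ℝⁿ} Σᵢⱼ (∂ᵢuⱼ)² dx = 2·∫_{ℝⁿ} Σᵢⱼ (½·(∂ᵢuⱼ + ∂ⱼuᵢ))² dx, i.e., the L²-norm of the full gradient equals √2 times the L²-norm of the symmetric gradient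 D u = ½·(∇u + (∇u)ᵀ). -/
/-!
Pointwise, `2 |D u|² = |∇u|² + ∑ᵢⱼ ∂ᵢuⱼ ∂ⱼuᵢ`, so the identity amounts to
`∫ ∂ᵢuⱼ ∂ⱼuᵢ = ∫ ∂ᵢuᵢ ∂ⱼuⱼ`, i.e. to `∫ ∂_v f ∂_w g = ∫ ∂_w f ∂_v g` for `C¹` compactly supported
`f, g`. For `C²` functions this is two integrations by parts. For `C¹` functions, replace `∂_w g`
by the difference quotient `(g (· + t w) - g) / t`: a change of variables moves the translation
onto `f` and one integration by parts moves `∂_v` onto `g`, giving the corresponding difference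
quotient of `f` against `∂_v g`; since `f` and `g` are Lipschitz, dominated convergence lets
`t → 0` on both sides.
-/

open MeasureTheory

theorem two_mul_sum_sq_half_add_transpose {ι : Type*} [Fintype ι] (a : ι → ι → ℝ) :
    2 * ∑ i, ∑ j, ((1 / 2 : ℝ) * (a i j + a j i)) ^ 2
      = ∑ i, ∑ j, a i j ^ 2 + ∑ i, ∑ j, a i j * a j i := by
  have hterm : ∀ i j, 2 * ((1 / 2 : ℝ) * (a i j + a j i)) ^ 2
      = a i j ^ 2 / 2 + a j i ^ 2 / 2 + a i j * a j i := fun i j ↦ by ring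
  simp only [Finset.mul_sum, hterm, Finset.sum_add_distrib, ← Finset.sum_div]
  rw [Finset.sum_comm (f := fun i j ↦ a j i ^ 2)]
  ring

theorem integral_finsetSum_finsetSum {α ι κ : Type*} [MeasurableSpace α] {μ : Measure α}
    (s : Finset ι) (t : Finset κ) {f : ι → κ → α → ℝ} (hf : ∀ i j, Integrable (f i j) μ) :
    ∫ x, ∑ i ∈ s, ∑ j ∈ t, f i j x ∂μ = ∑ i ∈ s, ∑ j ∈ t, ∫ x, f i j x ∂μ := by
  rw [integral_finsetSum s fun i _ ↦ integrable_finsetSum t fun j _ ↦ hf i j]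
  exact Finset.sum_congr rfl fun i _ ↦ integral_finsetSum t fun j _ ↦ hf i j

theorem integral_sub_comp_add_mul_eq {G : Type*} [NormedAddCommGroup G] [MeasurableSpace G]
    [BorelSpace G] {μ : Measure G} [IsFiniteMeasureOnCompacts μ] [μ.IsAddRightInvariant]
    {φ ψ : G → ℝ} (hφ : Continuous φ) (hφs : HasCompactSupport φ) (hψ : Continuous ψ) (a : G) :
    ∫ x, (φ (x + a) - φ x) * ψ x ∂μ = ∫ x, φ x * (ψ (x - a) - ψ x) ∂μ := by
  have htrans : ∫ x, φ (x + a) * ψ x ∂μ = ∫ x, φ x * ψ (x - a) ∂μ := by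
    rw [← integral_add_right_eq_self (fun x ↦ φ x * ψ (x - a)) a]
    simp only [add_sub_cancel_right]
  have hint : Integrable (fun x ↦ φ x * ψ x) μ :=
    (hφ.mul hψ).integrable_of_hasCompactSupport hφs.mul_right
  simp_rw [sub_mul, mul_sub]
  rw [integral_sub, integral_sub, htrans]
  · exact (hφ.mul (hψ.comp (continuous_sub_right a))).integrable_of_hasCompactSupport
      hφs.mul_right
  · exact hint
  · exact ((hφ.comp (continuous_add_const a)).mul hψ).integrable_of_hasCompactSupport
      (hφs.comp_homeomorph (Homeomorph.addRight a)).mul_right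
  · exact hint

variable {E : Type*} [NormedAddCommGroup E] [NormedSpace ℝ E] [MeasurableSpace E] [BorelSpace E]
  {μ : Measure E}

theorem integrable_fderiv_apply_mul_fderiv_apply [IsFiniteMeasureOnCompacts μ] {ι : Type*}
    [Fintype ι] {u : E → ι → ℝ} (hu : ContDiff ℝ 1 u) (hus : HasCompactSupport u)
    (v w : E) (i j : ι) :
    Integrable (fun x ↦ fderiv ℝ u x v i * fderiv ℝ u x w j) μ := by
  have hcont : ∀ v i, Continuous (fun x ↦ fderiv ℝ u x v i) := fun v i ↦
    (continuous_apply i).comp ((hu.continuous_fderiv one_ne_zero).clm_apply continuous_const)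
  exact ((hcont v i).mul (hcont w j)).integrable_of_hasCompactSupport
    ((hus.fderiv_apply ℝ v).comp_left (g := fun y : ι → ℝ ↦ y i) rfl).mul_right

variable [FiniteDimensional ℝ E] [μ.IsAddHaarMeasure]

theorem integral_sub_comp_add_mul_fderiv_eq {f g : E → ℝ} (hf : ContDiff ℝ 1 f)
    (hg : ContDiff ℝ 1 g) (hgs : HasCompactSupport g) (a v : E) :
    ∫ x, (g (x + a) - g x) * fderiv ℝ f x v ∂μ
      = ∫ x, fderiv ℝ g x v * (f x - f (x - a)) ∂μ := by
  set G : E → ℝ := fun x ↦ g (x + a) - g x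
  have hG : ContDiff ℝ 1 G := (hg.comp (contDiff_id.add contDiff_const)).sub hg
  have hGs : HasCompactSupport G :=
    (hgs.comp_homeomorph (Homeomorph.addRight a)).sub hgs
  have hGd : Differentiable ℝ G := hG.differentiable one_ne_zero
  have hfd : Differentiable ℝ f := hf.differentiable one_ne_zero
  have hG' : ∀ x, fderiv ℝ G x v = fderiv ℝ g (x + a) v - fderiv ℝ g x v := by
    intro x
    have hgd := hg.differentiable one_ne_zero
    have hderiv : HasFDerivAt G (fderiv ℝ g (x + a) - fderiv ℝ g x) x :=
      ((hasFDerivAt_comp_add_right a).2 (hgd (x + a)).hasFDerivAt).sub (hgd x).hasFDerivAt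
    rw [hderiv.fderiv]
    rfl
  have hdg : Continuous (fderiv ℝ g · v) :=
    (hg.continuous_fderiv one_ne_zero).clm_apply continuous_const
  calc ∫ x, G x * fderiv ℝ f x v ∂μ = -∫ x, fderiv ℝ G x v * f x ∂μ := by
        refine integral_mul_fderiv_eq_neg_fderiv_mul_of_integrable ?_ ?_ ?_
          (fun x _ ↦ hGd x) (fun x _ ↦ hfd x)
        · exact (((hG.continuous_fderiv one_ne_zero).clm_apply continuous_const).mul
            hf.continuous).integrable_of_hasCompactSupport (hGs.fderiv_apply ℝ v).mul_right
        · exact (hG.continuous.mul ((hf.continuous_fderiv one_ne_zero).clm_apply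
            continuous_const)).integrable_of_hasCompactSupport hGs.mul_right
        · exact (hG.continuous.mul hf.continuous).integrable_of_hasCompactSupport hGs.mul_right
    _ = -∫ x, fderiv ℝ g x v * (f (x - a) - f x) ∂μ := by
        simp_rw [hG']
        rw [integral_sub_comp_add_mul_eq hdg (hgs.fderiv_apply ℝ v) hf.continuous]
    _ = ∫ x, fderiv ℝ g x v * (f x - f (x - a)) ∂μ := by
        rw [← integral_neg]
        simp_rw [← mul_neg, neg_sub]

theorem integral_fderiv_mul_fderiv_comm {f g : E → ℝ} (hf : ContDiff ℝ 1 f)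
    (hfs : HasCompactSupport f) (hg : ContDiff ℝ 1 g) (hgs : HasCompactSupport g) (v w : E) :
    ∫ x, fderiv ℝ f x v * fderiv ℝ g x w ∂μ = ∫ x, fderiv ℝ f x w * fderiv ℝ g x v ∂μ := by
  obtain ⟨Cf, hCf⟩ := hf.lipschitzWith_of_hasCompactSupport hfs one_ne_zero
  obtain ⟨Cg, hCg⟩ := hg.lipschitzWith_of_hasCompactSupport hgs one_ne_zero
  have hdf : Integrable (fderiv ℝ f · v) μ :=
    ((hf.continuous_fderiv one_ne_zero).clm_apply continuous_const).integrable_of_hasCompactSupport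
      (hfs.fderiv_apply ℝ v)
  have hdg : Integrable (fderiv ℝ g · v) μ :=
    ((hg.continuous_fderiv one_ne_zero).clm_apply continuous_const).integrable_of_hasCompactSupport
      (hgs.fderiv_apply ℝ v)
  have hslopes : ∀ t : ℝ, ∫ x, t⁻¹ • (g (x + t • w) - g x) * fderiv ℝ f x v ∂μ
      = -∫ x, t⁻¹ • (f (x + t • -w) - f x) * fderiv ℝ g x v ∂μ := by
    intro t
    simp_rw [smul_eq_mul, mul_assoc, integral_const_mul,
      integral_sub_comp_add_mul_fderiv_eq hf hg hgs, smul_neg, ← sub_eq_add_neg,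
      ← mul_neg, ← integral_neg]
    congr 2 with x
    ring
  have hlim_g := hCg.integral_inv_smul_sub_mul_tendsto_integral_lineDeriv_mul (μ := μ) hdf w
  have hlim_f :=
    (hCf.integral_inv_smul_sub_mul_tendsto_integral_lineDeriv_mul (μ := μ) hdg (-w)).neg
  simp_rw [← hslopes] at hlim_f
  have h := tendsto_nhds_unique hlim_g hlim_f
  simp only [(hf.differentiable one_ne_zero _).lineDeriv_eq_fderiv,
    (hg.differentiable one_ne_zero _).lineDeriv_eq_fderiv, map_neg, neg_mul, integral_neg,
    neg_neg] at h
  simp_rw [mul_comm (fderiv ℝ f _ v)]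
  exact h

theorem integral_fderiv_apply_mul_fderiv_apply_comm {ι : Type*} [Fintype ι] {u : E → ι → ℝ}
    (hu : ContDiff ℝ 1 u) (hus : HasCompactSupport u) (v w : E) (i j : ι) :
    ∫ x, fderiv ℝ u x v i * fderiv ℝ u x w j ∂μ = ∫ x, fderiv ℝ u x w i * fderiv ℝ u x v j ∂μ := by
  have hcomp : ∀ k x v, fderiv ℝ (u · k) x v = fderiv ℝ u x v k := fun k x v ↦ by
    rw [fderiv_apply (hu.differentiable one_ne_zero x)]
    rfl
  have hcs : ∀ k, HasCompactSupport (u · k) := fun k ↦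
    hus.comp_left (g := fun y : ι → ℝ ↦ y k) rfl
  have h := integral_fderiv_mul_fderiv_comm (μ := μ) (contDiff_pi.1 hu i) (hcs i)
    (contDiff_pi.1 hu j) (hcs j) v w
  simpa only [hcomp] using h

theorem integral_sum_fderiv_mul_transpose_eq_integral_sq_div {ι : Type*} [Fintype ι]
    [DecidableEq ι] {μ : Measure (ι → ℝ)} [μ.IsAddHaarMeasure] {u : (ι → ℝ) → ι → ℝ}
    (hu : ContDiff ℝ 1 u) (hus : HasCompactSupport u) :
    ∫ x, ∑ i, ∑ j, fderiv ℝ u x (Pi.single i 1) j * fderiv ℝ u x (Pi.single j 1) i ∂μ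
      = ∫ x, (∑ i, fderiv ℝ u x (Pi.single i 1) i) ^ 2 ∂μ := by
  have hint := integrable_fderiv_apply_mul_fderiv_apply (μ := μ) hu hus
  simp_rw [sq, Finset.sum_mul_sum]
  rw [integral_finsetSum_finsetSum _ _ fun i j ↦ hint (Pi.single i 1) (Pi.single j 1) j i,
    integral_finsetSum_finsetSum _ _ fun i j ↦ hint (Pi.single i 1) (Pi.single j 1) i j]
  refine Finset.sum_congr rfl fun i _ ↦ Finset.sum_congr rfl fun j _ ↦ ?_
  rw [integral_fderiv_apply_mul_fderiv_apply_comm hu hus (Pi.single i 1) (Pi.single j 1) j i]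
  simp_rw [mul_comm (fderiv ℝ u _ (Pi.single j 1) j)]

theorem two_mul_integral_sum_sq_symm_fderiv_eq {ι : Type*} [Fintype ι] [DecidableEq ι]
    {μ : Measure (ι → ℝ)} [μ.IsAddHaarMeasure] {u : (ι → ℝ) → ι → ℝ} (hu : ContDiff ℝ 1 u)
    (hus : HasCompactSupport u) :
    2 * ∫ x, ∑ i, ∑ j,
        ((1 / 2 : ℝ) * (fderiv ℝ u x (Pi.single i 1) j + fderiv ℝ u x (Pi.single j 1) i)) ^ 2 ∂μ
      = (∫ x, ∑ i, ∑ j, (fderiv ℝ u x (Pi.single i 1) j) ^ 2 ∂μ)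
        + ∫ x, (∑ i, fderiv ℝ u x (Pi.single i 1) i) ^ 2 ∂μ := by
  have hint := integrable_fderiv_apply_mul_fderiv_apply (μ := μ) hu hus
  have hsum : ∀ {f : ι → ι → (ι → ℝ) → ℝ}, (∀ i j, Integrable (f i j) μ) →
      Integrable (fun x ↦ ∑ i, ∑ j, f i j x) μ := fun hf ↦
    integrable_finsetSum _ fun i _ ↦ integrable_finsetSum _ fun j _ ↦ hf i j
  rw [← integral_const_mul, ← integral_sum_fderiv_mul_transpose_eq_integral_sq_div hu hus,
    ← integral_add (hsum fun i j ↦ by simpa only [sq] using hint _ _ j j)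
      (hsum fun i j ↦ hint _ _ j i)]
  exact integral_congr_ae (.of_forall fun x ↦
    two_mul_sum_sq_half_add_transpose fun i j ↦ fderiv ℝ u x (Pi.single i 1) j)

theorem korn_identity_general (n : ℕ)
    (u : (Fin n → ℝ) → (Fin n → ℝ))
    (hu : ContDiff ℝ 1 u) (hsupp : HasCompactSupport u) :
    (2 * ∫ x, ∑ i, ∑ j,
        ((1 / 2 : ℝ) * (fderiv ℝ u x (Pi.single i 1) j + fderiv ℝ u x (Pi.single j 1) i)) ^ 2
      = (∫ x, ∑ i, ∑ j, (fderiv ℝ u x (Pi.single i 1) j) ^ 2)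
        + ∫ x, (∑ i, fderiv ℝ u x (Pi.single i 1) i) ^ 2) ∧
    ((∀ x, ∑ i, fderiv ℝ u x (Pi.single i 1) i = 0) →
      (∫ x, ∑ i, ∑ j, (fderiv ℝ u x (Pi.single i 1) j) ^ 2)
        = 2 * ∫ x, ∑ i, ∑ j,
            ((1 / 2 : ℝ) *
              (fderiv ℝ u x (Pi.single i 1) j + fderiv ℝ u x (Pi.single j 1) i)) ^ 2) := by
  have hkorn := two_mul_integral_sum_sq_symm_fderiv_eq (μ := volume) hu hsupp
  refine ⟨hkorn, fun hdiv ↦ ?_⟩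
  simpa [hdiv] using hkorn.symm

/-- Korn identity: for a `C¹` compactly supported vector field `u : ℝⁿ → ℝⁿ`,
`2∫ |D u|² = ∫ |∇u|² + ∫ (div u)²` where `D u` is the symmetric gradient; in particular,
if `div u ≡ 0` then `∫ |∇u|² = 2∫ |D u|²`. -/
theorem korn_identity (n : ℕ) (hn : 1 ≤ n)
    (u : (Fin n → ℝ) → (Fin n → ℝ))
    (hu : ContDiff ℝ 1 u) (hsupp : HasCompactSupport u) :
    (2 * ∫ x, ∑ i, ∑ j,
        ((1 / 2 : ℝ) * (fderiv ℝ u x (Pi.single i 1) j + fderiv ℝ u x (Pi.single j 1) i)) ^ 2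
      = (∫ x, ∑ i, ∑ j, (fderiv ℝ u x (Pi.single i 1) j) ^ 2)
        + ∫ x, (∑ i, fderiv ℝ u x (Pi.single i 1) i) ^ 2) ∧
    ((∀ x, ∑ i, fderiv ℝ u x (Pi.single i 1) i = 0) →
      (∫ x, ∑ i, ∑ j, (fderiv ℝ u x (Pi.single i 1) j) ^ 2)
        = 2 * ∫ x, ∑ i, ∑ j,
            ((1 / 2 : ℝ) *
              (fderiv ℝ u x (Pi.single i 1) j + fderiv ℝ u x (Pi.single j 1) i)) ^ 2) :=
  korn_identity_general n u hu hsupp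
end

section
/- Let A, B be real constants with 0 < A < B and let W be the Flory–Huggins potential. Let φ : ℝ² → ℝ be smooth and compactly supported with φ(x) ∈ (−1,1) for every x ∈ ℝ², and set μ = −Δφ + W'(φ). Then ∫_{ℝ²} (Δφ(x))² dx = −∫_{ℝ²} W''(φ(x))·|∇φ(x)|² dx + ∫_{ℝ²} ∇μ(x)·∇φ(x) dx, and consequently ∫_{ℝ²} (Δφ)² dx ≤ (B−A)·∫_{ℝ²} |∇φ|² dx + ∫_{ℝ²} ∇μ·∇φ dx. -/
open Real Set MeasureTheory

private lemma smooth_cs_lip {f : (Fin 2 → ℝ) → ℝ} (hf : ContDiff ℝ (⊤ : ℕ∞) f)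
    (hs : HasCompactSupport f) : ∃ C : NNReal, LipschitzWith C f := by
  obtain ⟨C, hC⟩ := (hf.continuous_fderiv (by simp)).bounded_above_of_compact_support (hs.fderiv ℝ)
  refine ⟨⟨max C 0, le_max_right _ _⟩, lipschitzWith_of_nnnorm_fderiv_le
    (hf.differentiable (by simp)) fun x => ?_⟩
  have h := (hC x).trans (le_max_left C 0)
  exact_mod_cast h

private lemma ibp {f g : (Fin 2 → ℝ) → ℝ} (hf : ContDiff ℝ (⊤ : ℕ∞) f) (hfs : HasCompactSupport f)
    (hg : ContDiff ℝ (⊤ : ℕ∞) g) (hgs : HasCompactSupport g) (v : Fin 2 → ℝ) :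
    ∫ x, fderiv ℝ f x v * g x = -∫ x, fderiv ℝ g x v * f x := by
  obtain ⟨Cf, hCf⟩ := smooth_cs_lip hf hfs
  obtain ⟨Cg, hCg⟩ := smooth_cs_lip hg hgs
  have h := LipschitzWith.integral_lineDeriv_mul_eq (μ := (volume : Measure (Fin 2 → ℝ)))
    hCf hCg hgs v
  have e1 : ∀ x, lineDeriv ℝ f x v = fderiv ℝ f x v := fun x =>
    (hf.differentiable (by simp) x).lineDeriv_eq_fderiv
  have e2 : ∀ x, lineDeriv ℝ g x (-v) = -(fderiv ℝ g x v) := fun x => by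
    rw [(hg.differentiable (by simp) x).lineDeriv_eq_fderiv, map_neg]
  simp only [e1, e2, neg_mul] at h
  rw [h, integral_neg]

private lemma hasDerivAt_W' (A B r : ℝ) (h1 : -1 < r) (h2 : r < 1) :
    HasDerivAt (fun s => A / 2 * Real.log ((1 + s) / (1 - s)) - B * s)
      (A / (1 - r ^ 2) - B) r := by
  have hp1 : 0 < 1 + r := by linarith
  have hp2 : 0 < 1 - r := by linarith
  have hnum : HasDerivAt (fun s : ℝ => 1 + s) 1 r := by
    simpa using (hasDerivAt_id r).const_add 1
  have hden : HasDerivAt (fun s : ℝ => 1 - s) (-1) r := by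
    simpa using (hasDerivAt_id r).const_sub 1
  have hq := hnum.div hden hp2.ne'
  have hqpos : 0 < (1 + r) / (1 - r) := div_pos hp1 hp2
  have hlog := (Real.hasDerivAt_log hqpos.ne').comp r hq
  have hBs : HasDerivAt (fun s : ℝ => B * s) B r := by
    simpa using (hasDerivAt_id r).const_mul B
  have h := (hlog.const_mul (A / 2)).sub hBs
  refine HasDerivAt.congr_deriv h ?_
  have h3 : (1 : ℝ) - r ^ 2 ≠ 0 := by nlinarith
  have h4 : (1 : ℝ) - r ≠ 0 := hp2.ne'
  have h5 : (1 : ℝ) + r ≠ 0 := hp1.ne'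
  field_simp
  ring

private lemma contDiff_dd {f : (Fin 2 → ℝ) → ℝ} (hf : ContDiff ℝ (⊤ : ℕ∞) f) (v : Fin 2 → ℝ) :
    ContDiff ℝ (⊤ : ℕ∞) (fun y => fderiv ℝ f y v) :=
  (hf.fderiv_right (by simp)).clm_apply contDiff_const

/-- For a smooth compactly supported `φ : ℝ² → ℝ` valued in `(-1,1)`, with
`μ = -Δφ + W'(φ)` for the Flory–Huggins potential (`0 < A < B`), one has
`∫ (Δφ)² = -∫ W''(φ)|∇φ|² + ∫ ∇μ·∇φ`, and consequently
`∫ (Δφ)² ≤ (B-A)∫ |∇φ|² + ∫ ∇μ·∇φ`. -/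
theorem laplacian_square_identity (A B : ℝ) (hA : 0 < A) (hAB : A < B)
    (φ : (Fin 2 → ℝ) → ℝ)
    (hφ : ContDiff ℝ (⊤ : ℕ∞) φ) (hφsupp : HasCompactSupport φ)
    (hφrange : ∀ x, φ x ∈ Set.Ioo (-1 : ℝ) 1)
    (μ : (Fin 2 → ℝ) → ℝ)
    (hμ : ∀ x, μ x =
      -(∑ i, fderiv ℝ (fun y => fderiv ℝ φ y (Pi.single i 1)) x (Pi.single i 1))
        + (A / 2 * Real.log ((1 + φ x) / (1 - φ x)) - B * φ x)) :
    (∫ x, (∑ i, fderiv ℝ (fun y => fderiv ℝ φ y (Pi.single i 1)) x (Pi.single i 1)) ^ 2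
      = -(∫ x, (A / (1 - (φ x) ^ 2) - B) * ∑ i, (fderiv ℝ φ x (Pi.single i 1)) ^ 2)
        + ∫ x, ∑ i, fderiv ℝ μ x (Pi.single i 1) * fderiv ℝ φ x (Pi.single i 1)) ∧
    (∫ x, (∑ i, fderiv ℝ (fun y => fderiv ℝ φ y (Pi.single i 1)) x (Pi.single i 1)) ^ 2
      ≤ (B - A) * (∫ x, ∑ i, (fderiv ℝ φ x (Pi.single i 1)) ^ 2)
        + ∫ x, ∑ i, fderiv ℝ μ x (Pi.single i 1) * fderiv ℝ φ x (Pi.single i 1)) := by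
  have hμfun : μ = fun x =>
      -(∑ i, fderiv ℝ (fun y => fderiv ℝ φ y (Pi.single i 1)) x (Pi.single i 1))
        + (A / 2 * Real.log ((1 + φ x) / (1 - φ x)) - B * φ x) := funext hμ
  subst hμfun
  -- notation
  -- first derivatives
  have hψc : ∀ i : Fin 2, ContDiff ℝ (⊤ : ℕ∞) (fun y => fderiv ℝ φ y (Pi.single i 1)) :=
    fun i => contDiff_dd hφ _
  have hψs : ∀ i : Fin 2, HasCompactSupport (fun y => fderiv ℝ φ y (Pi.single i 1)) :=
    fun i => hφsupp.fderiv_apply ℝ (Pi.single i 1)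
  -- the Laplacian D
  have hDc : ContDiff ℝ (⊤ : ℕ∞) (fun x =>
      ∑ i, fderiv ℝ (fun y => fderiv ℝ φ y (Pi.single i 1)) x (Pi.single i 1)) :=
    ContDiff.sum fun i _ => contDiff_dd (hψc i) _
  have hDs : HasCompactSupport (fun x =>
      ∑ i, fderiv ℝ (fun y => fderiv ℝ φ y (Pi.single i 1)) x (Pi.single i 1)) := by
    simp only [Fin.sum_univ_two]
    exact ((hψs 0).fderiv_apply ℝ (Pi.single 0 1)).add ((hψs 1).fderiv_apply ℝ (Pi.single 1 1))
  set D : (Fin 2 → ℝ) → ℝ := fun x =>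
      ∑ i, fderiv ℝ (fun y => fderiv ℝ φ y (Pi.single i 1)) x (Pi.single i 1) with hDdef
  -- generic integrability from continuity and compact support of second factor
  have hInt : ∀ (u w : (Fin 2 → ℝ) → ℝ), Continuous u → Continuous w → HasCompactSupport w →
      Integrable (fun x => u x * w x) := fun u w hu hw hws =>
    (hu.mul hw).integrable_of_hasCompactSupport (hws.mul_left)
  have hIntL : ∀ (u w : (Fin 2 → ℝ) → ℝ), Continuous u → Continuous w → HasCompactSupport u →
      Integrable (fun x => u x * w x) := fun u w hu hw hus =>
    (hu.mul hw).integrable_of_hasCompactSupport (hus.mul_right)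
  -- integration by parts:  ∫ ∑ᵢ ∂ᵢD ∂ᵢφ = -∫ D²
  have hIBP : (∫ x, ∑ i, fderiv ℝ D x (Pi.single i 1) * fderiv ℝ φ x (Pi.single i 1))
      = -∫ x, D x ^ 2 := by
    rw [integral_finset_sum _ (fun i _ => hInt _ _ (contDiff_dd hDc _).continuous
      (hψc i).continuous (hψs i))]
    have e : ∀ i : Fin 2, (∫ x, fderiv ℝ D x (Pi.single i 1) * fderiv ℝ φ x (Pi.single i 1))
        = -∫ x, fderiv ℝ (fun y => fderiv ℝ φ y (Pi.single i 1)) x (Pi.single i 1) * D x :=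
      fun i => ibp hDc hDs (hψc i) (hψs i) _
    rw [Fin.sum_univ_two, e 0, e 1, ← neg_add, ← integral_add
      (hInt _ _ (contDiff_dd (hψc 0) _).continuous hDc.continuous hDs)
      (hInt _ _ (contDiff_dd (hψc 1) _).continuous hDc.continuous hDs)]
    congr 1
    apply integral_congr_ae
    filter_upwards with x
    rw [hDdef]
    simp only [Fin.sum_univ_two]
    ring
  -- derivative of μ
  have hφd := hφ.differentiable (by simp)
  have hfd : ∀ x, fderiv ℝ (fun x =>
      -(∑ i, fderiv ℝ (fun y => fderiv ℝ φ y (Pi.single i 1)) x (Pi.single i 1))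
        + (A / 2 * Real.log ((1 + φ x) / (1 - φ x)) - B * φ x)) x
      = -(fderiv ℝ D x) + (A / (1 - φ x ^ 2) - B) • fderiv ℝ φ x := fun x => by
    have hDat : HasFDerivAt D (fderiv ℝ D x) x := (hDc.differentiable (by simp) x).hasFDerivAt
    have hWat := (hasDerivAt_W' A B (φ x) (hφrange x).1 (hφrange x).2).comp_hasFDerivAt x
      (hφd x).hasFDerivAt
    exact (hDat.neg.add hWat).fderiv
  -- pointwise formula for ∇μ·∇φ
  have hpt : ∀ x, (∑ i, fderiv ℝ (fun x =>
      -(∑ i, fderiv ℝ (fun y => fderiv ℝ φ y (Pi.single i 1)) x (Pi.single i 1))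
        + (A / 2 * Real.log ((1 + φ x) / (1 - φ x)) - B * φ x)) x (Pi.single i 1)
        * fderiv ℝ φ x (Pi.single i 1))
      = -(∑ i, fderiv ℝ D x (Pi.single i 1) * fderiv ℝ φ x (Pi.single i 1))
        + (A / (1 - φ x ^ 2) - B) * ∑ i, (fderiv ℝ φ x (Pi.single i 1)) ^ 2 := fun x => by
    simp only [hfd x]
    simp only [ContinuousLinearMap.add_apply, ContinuousLinearMap.neg_apply,
      ContinuousLinearMap.coe_smul', Pi.smul_apply, smul_eq_mul, Fin.sum_univ_two]
    ring
  -- continuity of the coefficient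
  have hcC : Continuous (fun x => A / (1 - φ x ^ 2) - B) := by
    refine (continuous_const.div (continuous_const.sub (hφ.continuous.pow 2)) fun x => ?_).sub
      continuous_const
    have h := hφrange x
    simp only [Set.mem_Ioo] at h
    show (1:ℝ) - φ x ^ 2 ≠ 0
    nlinarith [h.1, h.2]
  -- |∇φ|² data
  have hSc : Continuous (fun x => ∑ i, (fderiv ℝ φ x (Pi.single i 1)) ^ 2) := by
    exact continuous_finset_sum _ fun i _ => ((hψc i).continuous.pow 2)
  have hSs : HasCompactSupport (fun x => ∑ i, (fderiv ℝ φ x (Pi.single i 1)) ^ 2) := by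
    simp only [Fin.sum_univ_two, sq]
    exact ((hψs 0).mul_left).add ((hψs 1).mul_left)
  have hIntS : Integrable (fun x => ∑ i, (fderiv ℝ φ x (Pi.single i 1)) ^ 2) :=
    hSc.integrable_of_hasCompactSupport hSs
  have hIntcS : Integrable (fun x =>
      (A / (1 - φ x ^ 2) - B) * ∑ i, (fderiv ℝ φ x (Pi.single i 1)) ^ 2) :=
    hInt _ _ hcC hSc hSs
  have hIntDD : Integrable (fun x => ∑ i, fderiv ℝ D x (Pi.single i 1)
      * fderiv ℝ φ x (Pi.single i 1)) := by
    simp only [Fin.sum_univ_two]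
    exact (hInt _ _ (contDiff_dd hDc _).continuous (hψc 0).continuous (hψs 0)).add
      (hInt _ _ (contDiff_dd hDc _).continuous (hψc 1).continuous (hψs 1))
  -- value of ∫ ∇μ·∇φ
  have hμint : (∫ x, ∑ i, fderiv ℝ (fun x =>
      -(∑ i, fderiv ℝ (fun y => fderiv ℝ φ y (Pi.single i 1)) x (Pi.single i 1))
        + (A / 2 * Real.log ((1 + φ x) / (1 - φ x)) - B * φ x)) x (Pi.single i 1)
        * fderiv ℝ φ x (Pi.single i 1))
      = (∫ x, D x ^ 2)
        + ∫ x, (A / (1 - φ x ^ 2) - B) * ∑ i, (fderiv ℝ φ x (Pi.single i 1)) ^ 2 := by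
    have h1 : Integrable (fun x => -∑ i, fderiv ℝ D x (Pi.single i 1)
        * fderiv ℝ φ x (Pi.single i 1)) volume := hIntDD.neg
    rw [integral_congr_ae (Filter.Eventually.of_forall hpt), integral_add h1 hIntcS,
      integral_neg, hIBP, neg_neg]
  constructor
  · rw [hμint, hDdef]
    ring
  · have hmono : (∫ x, -((A / (1 - φ x ^ 2) - B) * ∑ i, (fderiv ℝ φ x (Pi.single i 1)) ^ 2))
        ≤ ∫ x, (B - A) * ∑ i, (fderiv ℝ φ x (Pi.single i 1)) ^ 2 := by
      refine integral_mono hIntcS.neg (hIntS.const_mul _) fun x => ?_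
      have hS0 : (0:ℝ) ≤ ∑ i, (fderiv ℝ φ x (Pi.single i 1)) ^ 2 :=
        Finset.sum_nonneg fun i _ => sq_nonneg _
      have h := hφrange x
      simp only [Set.mem_Ioo] at h
      have h1 : (0:ℝ) < 1 - φ x ^ 2 := by nlinarith [h.1, h.2]
      have h2 : A ≤ A / (1 - φ x ^ 2) := by
        rw [le_div_iff₀ h1]; nlinarith [sq_nonneg (φ x)]
      have : B - A / (1 - φ x ^ 2) ≤ B - A := by linarith
      calc -((A / (1 - φ x ^ 2) - B) * ∑ i, (fderiv ℝ φ x (Pi.single i 1)) ^ 2)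
          = (B - A / (1 - φ x ^ 2)) * ∑ i, (fderiv ℝ φ x (Pi.single i 1)) ^ 2 := by ring
        _ ≤ (B - A) * ∑ i, (fderiv ℝ φ x (Pi.single i 1)) ^ 2 :=
            mul_le_mul_of_nonneg_right this hS0
    rw [hμint, hDdef]
    rw [integral_neg] at hmono
    rw [integral_const_mul] at hmono
    linarith
end

section
/- There exists a constant C > 0 such that for every smooth compactly supported function u : ℝ² → ℝ, the Ladyzhenskaya inequality ‖u‖_{L⁴(ℝ²)}² ≤ C·‖u‖_{L²(ℝ²)}·‖∇u‖_{L²(ℝ²)} holds, where ‖∇u‖_{L²(ℝ²)} denotes the L²-norm of the (Euclidean operator or Frobenius) norm of the Fréchet derivative of u. -/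
open Real Set MeasureTheory
open scoped ENNReal NNReal

/-- Ladyzhenskaya inequality in the plane: there exists `C > 0` such that for every
smooth compactly supported `u : ℝ² → ℝ`,
`‖u‖_{L⁴}² ≤ C·‖u‖_{L²}·‖∇u‖_{L²}`. -/
theorem ladyzhenskaya_inequality :
    ∃ C : ℝ, 0 < C ∧ ∀ u : EuclideanSpace ℝ (Fin 2) → ℝ,
      ContDiff ℝ (⊤ : ℕ∞) u → HasCompactSupport u →
      eLpNorm u 4 volume ^ 2 ≤
        ENNReal.ofReal C * (eLpNorm u 2 volume *
          eLpNorm (fun x => ‖fderiv ℝ u x‖) 2 volume) := by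
  set E := EuclideanSpace ℝ (Fin 2)
  set C₀ : ℝ≥0 := eLpNormLESNormFDerivOneConst (volume : Measure E) 2 with hC₀
  refine ⟨2 * (C₀ + 1), by positivity, fun u hu h2u => ?_⟩
  have hu1 : ContDiff ℝ 1 u := hu.of_le (by simp)
  have hv : ContDiff ℝ 1 (u * u) := hu1.mul hu1
  have h2v : HasCompactSupport (u * u) := h2u.mul_left
  have hfr : Module.finrank ℝ E = 2 := finrank_euclideanSpace_fin
  have hconj : NNReal.HolderConjugate (Module.finrank ℝ E) 2 := by
    rw [hfr]
    constructor
    · show ((2:ℕ):ℝ≥0)⁻¹ + 2⁻¹ = 1⁻¹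
      rw [Nat.cast_ofNat, inv_one, ← two_mul, mul_inv_cancel₀ two_ne_zero]
    · norm_num
    · norm_num
  have key := eLpNorm_le_eLpNorm_fderiv_one (volume : Measure E) hv h2v hconj
  -- identify eLpNorm (u*u) 2 with eLpNorm u 4 ^ 2
  have hsq : eLpNorm (u * u) 2 volume = eLpNorm u 4 volume ^ 2 := by
    have := eLpNorm_norm_rpow (p := 2) (μ := (volume : Measure E)) u (by norm_num : (0:ℝ) < 2)
    have h1 : (fun x => ‖u x‖ ^ (2:ℝ)) = u * u := by
      funext x
      simp [Real.rpow_two, Real.norm_eq_abs, ← sq_abs (u x), sq]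
    have h2 : (2 : ℝ≥0∞) * ENNReal.ofReal (2:ℝ) = 4 := by
      rw [ENNReal.ofReal_ofNat]; norm_num
    rw [h1, h2] at this
    rw [this, ← ENNReal.rpow_natCast]
    norm_num
  set w : E → (E →L[ℝ] ℝ) := fun x => u x • fderiv ℝ u x with hw
  -- identify the derivative of u*u
  have hfd : fderiv ℝ (u * u) = (2:ℝ) • w := by
    funext x
    have := fderiv_mul (𝕜 := ℝ) (hu1.differentiable one_ne_zero x) (hu1.differentiable one_ne_zero x)
    show fderiv ℝ (fun y => u y * u y) x = (2:ℝ) • w x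
    rw [← Pi.mul_def, this, hw, two_smul]
  -- Hölder
  have hmeas1 : AEStronglyMeasurable u (volume : Measure E) :=
    hu.continuous.aestronglyMeasurable
  have hmeas2 : AEStronglyMeasurable (fderiv ℝ u) (volume : Measure E) :=
    (hu1.continuous_fderiv one_ne_zero).aestronglyMeasurable
  have holder : eLpNorm w 1 volume ≤
      eLpNorm u 2 volume * eLpNorm (fderiv ℝ u) 2 volume := by
    refine (eLpNorm_le_eLpNorm_mul_eLpNorm'_of_norm (p := 2) (q := 2) hmeas1 hmeas2 (· • ·) 1
      (Filter.Eventually.of_forall fun x => ?_)).trans_eq (by rw [ENNReal.coe_one, one_mul])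
    · rw [norm_smul, NNReal.coe_one, one_mul]
  have hsmul : eLpNorm ((2:ℝ) • w) 1 volume ≤ 2 * eLpNorm w 1 volume := by
    refine le_trans (eLpNorm_const_smul_le (c := (2:ℝ)) (f := w)) ?_
    have : ‖(2:ℝ)‖ₑ = 2 := by rw [Real.enorm_eq_ofReal_abs]; norm_num
    rw [this]
  have hofReal : ENNReal.ofReal (2 * ((C₀:ℝ) + 1)) = 2 * ((C₀ : ℝ≥0∞) + 1) := by
    rw [ENNReal.ofReal_mul (by norm_num), ENNReal.ofReal_add (by positivity) (by norm_num)]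
    simp
  calc eLpNorm u 4 volume ^ 2 = eLpNorm (u * u) 2 volume := hsq.symm
    _ ≤ C₀ * eLpNorm (fderiv ℝ (u * u)) 1 volume := key
    _ = C₀ * eLpNorm ((2:ℝ) • w) 1 volume := by rw [hfd]
    _ ≤ C₀ * (2 * eLpNorm w 1 volume) := by gcongr
    _ ≤ C₀ * (2 * (eLpNorm u 2 volume * eLpNorm (fderiv ℝ u) 2 volume)) := by gcongr
    _ ≤ ENNReal.ofReal (2 * (C₀ + 1)) *
        (eLpNorm u 2 volume * eLpNorm (fun x => ‖fderiv ℝ u x‖) 2 volume) := by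
        rw [eLpNorm_norm, hofReal, ← mul_assoc, mul_comm (C₀ : ℝ≥0∞) 2]
        gcongr
        exact le_self_add
end

section
/- There exists a constant C > 0 such that for every smooth compactly supported function f : ℝ² → ℝ, the Gagliardo–Nirenberg-type inequality ‖∇f‖_{L⁴(ℝ²)}² ≤ C·‖f‖_{L^∞(ℝ²)}·‖∇²f‖_{L²(ℝ²)} holds, where ∇²f denotes the second (iterated Fréchet) derivative of f and ‖∇f‖_{L⁴(ℝ²)}, ‖∇²f‖_{L²(ℝ²)} are the L⁴- and L²-norms of the pointwise norms of the first and second derivatives, respectively. -/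
open Real Set MeasureTheory
open scoped ENNReal NNReal

noncomputable section
namespace GNaux

abbrev E2 := EuclideanSpace ℝ (Fin 2)

def ee (i : Fin 2) : E2 := EuclideanSpace.single i 1

lemma norm_ee (i : Fin 2) : ‖ee i‖ = 1 := by simp [ee, EuclideanSpace.norm_single]

def dd (f : E2 → ℝ) (i : Fin 2) : E2 → ℝ := fun x => fderiv ℝ f x (ee i)
def ss (f : E2 → ℝ) : E2 → ℝ := fun x => ∑ i, dd f i x ^ 2
def gg (f : E2 → ℝ) (i : Fin 2) : E2 → ℝ := fun x => ss f x * dd f i x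

variable {f : E2 → ℝ}

lemma ss_nonneg (x : E2) : 0 ≤ ss f x := Finset.sum_nonneg fun i _ => sq_nonneg _

lemma dd_cd (hf : ContDiff ℝ (⊤ : ℕ∞) f) (i : Fin 2) : ContDiff ℝ (⊤ : ℕ∞) (dd f i) :=
  (hf.fderiv_right (by simp)).clm_apply contDiff_const

lemma dd_supp (h2f : HasCompactSupport f) (i : Fin 2) : HasCompactSupport (dd f i) :=
  (h2f.fderiv ℝ).comp_left (g := fun L : E2 →L[ℝ] ℝ => L (ee i)) rfl

lemma ss_cd (hf : ContDiff ℝ (⊤ : ℕ∞) f) : ContDiff ℝ (⊤ : ℕ∞) (ss f) :=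
  ContDiff.sum fun i _ => (dd_cd hf i).pow 2

lemma gg_cd (hf : ContDiff ℝ (⊤ : ℕ∞) f) (i : Fin 2) : ContDiff ℝ (⊤ : ℕ∞) (gg f i) :=
  (ss_cd hf).mul (dd_cd hf i)

lemma gg_supp (h2f : HasCompactSupport f) (i : Fin 2) : HasCompactSupport (gg f i) :=
  (dd_supp h2f i).mul_left

lemma ss_supp (h2f : HasCompactSupport f) : HasCompactSupport (ss f) := by
  have : ss f = (fun x => dd f 0 x * dd f 0 x) + fun x => dd f 1 x * dd f 1 x := by
    funext x; simp [ss, Fin.sum_univ_two, Pi.add_apply]; ring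
  rw [this]
  exact ((dd_supp h2f 0).mul_left).add ((dd_supp h2f 1).mul_left)

lemma norm_clm_sq_le (L : E2 →L[ℝ] ℝ) : ‖L‖ ^ 2 ≤ ∑ i, (L (ee i)) ^ 2 := by
  have hB : (0:ℝ) ≤ Real.sqrt (∑ i, (L (ee i)) ^ 2) := Real.sqrt_nonneg _
  have hL : ‖L‖ ≤ Real.sqrt (∑ i, (L (ee i)) ^ 2) := by
    apply ContinuousLinearMap.opNorm_le_bound _ hB
    intro v
    have hv : v = ∑ i, v i • ee i := by
      ext j
      fin_cases j <;> simp [ee, EuclideanSpace.single_apply, Finset.sum_apply, Fin.sum_univ_two]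
    calc ‖L v‖ = ‖∑ i, v i * L (ee i)‖ := by
          conv_lhs => rw [hv]
          simp [map_sum]
      _ ≤ Real.sqrt (∑ i, (v i)^2) * Real.sqrt (∑ i, (L (ee i))^2) := by
          rw [norm_eq_abs]
          refine (Finset.abs_sum_le_sum_abs _ _).trans ?_
          have h1 : ∑ i, |v i * L (ee i)| = ∑ i, |v i| * |L (ee i)| := by simp [abs_mul]
          rw [h1]
          have h2 := Finset.sum_mul_sq_le_sq_mul_sq Finset.univ
            (fun i => |v i|) (fun i => |L (ee i)|)
          have h3 : (0:ℝ) ≤ ∑ i, |v i| * |L (ee i)| :=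
            Finset.sum_nonneg fun i _ => by positivity
          calc ∑ i, |v i| * |L (ee i)|
              = Real.sqrt ((∑ i, |v i| * |L (ee i)|)^2) := (Real.sqrt_sq h3).symm
            _ ≤ Real.sqrt ((∑ i, (v i)^2) * ∑ i, (L (ee i))^2) := by
                apply Real.sqrt_le_sqrt
                simpa [sq_abs] using h2
            _ = _ := Real.sqrt_mul (by positivity) _
      _ = Real.sqrt (∑ i, (L (ee i))^2) * ‖v‖ := by
          rw [EuclideanSpace.norm_eq, mul_comm]
          norm_num [Real.sqrt_eq_iff_eq_sq]
  calc ‖L‖ ^ 2 ≤ Real.sqrt (∑ i, (L (ee i)) ^ 2) ^ 2 := by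
        have := norm_nonneg L; nlinarith
    _ = ∑ i, (L (ee i)) ^ 2 := Real.sq_sqrt (by positivity)

lemma hasfderiv_ss (hf : ContDiff ℝ (⊤ : ℕ∞) f) (x : E2) :
    HasFDerivAt (ss f) (∑ j, (2 * dd f j x) • fderiv ℝ (dd f j) x) x := by
  have h : ∀ j : Fin 2, HasFDerivAt (fun y => dd f j y ^ 2)
      ((2 * dd f j x) • fderiv ℝ (dd f j) x) x := by
    intro j
    have hj : HasFDerivAt (dd f j) (fderiv ℝ (dd f j) x) x :=
      (((dd_cd hf j).differentiable (by simp)) x).hasFDerivAt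
    have h2 := hj.mul hj
    have hcl : (2 * dd f j x) • fderiv ℝ (dd f j) x
        = dd f j x • fderiv ℝ (dd f j) x + dd f j x • fderiv ℝ (dd f j) x := by
      rw [two_mul, add_smul]
    rw [hcl]
    simp only [pow_two]; exact h2
  exact HasFDerivAt.fun_sum fun j _ => h j

lemma fderiv_gg_apply (hf : ContDiff ℝ (⊤ : ℕ∞) f) (i : Fin 2) (x : E2) :
    fderiv ℝ (gg f i) x (ee i) =
      ss f x * fderiv ℝ (dd f i) x (ee i) +
        dd f i x * ∑ j, 2 * dd f j x * fderiv ℝ (dd f j) x (ee i) := by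
  have hi : HasFDerivAt (dd f i) (fderiv ℝ (dd f i) x) x :=
    (((dd_cd hf i).differentiable (by simp)) x).hasFDerivAt
  have hs := hasfderiv_ss hf x
  have hg : HasFDerivAt (gg f i)
      (ss f x • fderiv ℝ (dd f i) x + dd f i x • (∑ j, (2 * dd f j x) • fderiv ℝ (dd f j) x)) x :=
    hs.mul hi
  rw [hg.fderiv]
  simp [ContinuousLinearMap.sum_apply, Finset.mul_sum]
  ring_nf

lemma hess_bound (hf : ContDiff ℝ (⊤ : ℕ∞) f) (i j : Fin 2) (x : E2) :
    |fderiv ℝ (dd f j) x (ee i)| ≤ ‖iteratedFDeriv ℝ 2 f x‖ := by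
  have hdf : DifferentiableAt ℝ (fderiv ℝ f) x :=
    ((hf.fderiv_right (m := (⊤ : ℕ∞)) (by simp)).differentiable (by simp)).differentiableAt
  have key : fderiv ℝ (dd f j) x (ee i) = fderiv ℝ (fderiv ℝ f) x (ee i) (ee j) := by
    have : dd f j = fun y => (fderiv ℝ f y) (ee j) := rfl
    rw [this, fderiv_clm_apply hdf (differentiableAt_const _)]
    simp
  rw [key]
  have h2 : fderiv ℝ (fderiv ℝ f) x (ee i) (ee j) = iteratedFDeriv ℝ 2 f x ![ee i, ee j] := by
    rw [iteratedFDeriv_two_apply]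
    simp
  rw [h2]
  calc |iteratedFDeriv ℝ 2 f x ![ee i, ee j]|
      ≤ ‖iteratedFDeriv ℝ 2 f x‖ * ∏ k, ‖(![ee i, ee j]) k‖ :=
        (iteratedFDeriv ℝ 2 f x).le_opNorm _
    _ = ‖iteratedFDeriv ℝ 2 f x‖ := by
        simp [Fin.prod_univ_two, norm_ee]

lemma div_bound (hf : ContDiff ℝ (⊤ : ℕ∞) f) (x : E2) :
    |∑ i, fderiv ℝ (gg f i) x (ee i)| ≤ 10 * ss f x * ‖iteratedFDeriv ℝ 2 f x‖ := by
  set H := ‖iteratedFDeriv ℝ 2 f x‖ with hH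
  have hH0 : 0 ≤ H := norm_nonneg _
  have hS0 : 0 ≤ ss f x := Finset.sum_nonneg fun i _ => sq_nonneg _
  have hd : ∀ j, |dd f j x| ≤ Real.sqrt (ss f x) := by
    intro j
    rw [← Real.sqrt_sq_eq_abs]
    exact Real.sqrt_le_sqrt (Finset.single_le_sum
      (f := fun j => dd f j x ^ 2) (fun i _ => sq_nonneg _) (Finset.mem_univ j))
  have hsq : Real.sqrt (ss f x) * Real.sqrt (ss f x) = ss f x := Real.mul_self_sqrt hS0
  have key : ∀ i, |fderiv ℝ (gg f i) x (ee i)| ≤ 5 * ss f x * H := by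
    intro i
    rw [fderiv_gg_apply hf i x]
    have hb : ∀ j, |fderiv ℝ (dd f j) x (ee i)| ≤ H := fun j => hess_bound hf i j x
    have h1 : |∑ j, 2 * dd f j x * fderiv ℝ (dd f j) x (ee i)|
        ≤ 4 * Real.sqrt (ss f x) * H := by
      refine (Finset.abs_sum_le_sum_abs _ _).trans ?_
      have hterm : ∀ j : Fin 2, |2 * dd f j x * fderiv ℝ (dd f j) x (ee i)|
          ≤ 2 * Real.sqrt (ss f x) * H := by
        intro j
        rw [abs_mul, abs_mul, abs_two]
        gcongr
        · exact hd j
        · exact hb j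
      calc ∑ j, |2 * dd f j x * fderiv ℝ (dd f j) x (ee i)|
          ≤ ∑ _j : Fin 2, 2 * Real.sqrt (ss f x) * H :=
            Finset.sum_le_sum fun j _ => hterm j
        _ = 4 * Real.sqrt (ss f x) * H := by
            simp [Fin.sum_univ_two]; ring
    calc |ss f x * fderiv ℝ (dd f i) x (ee i)
          + dd f i x * ∑ j, 2 * dd f j x * fderiv ℝ (dd f j) x (ee i)|
        ≤ |ss f x * fderiv ℝ (dd f i) x (ee i)|
          + |dd f i x * ∑ j, 2 * dd f j x * fderiv ℝ (dd f j) x (ee i)| := abs_add_le _ _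
      _ ≤ ss f x * H + Real.sqrt (ss f x) * (4 * Real.sqrt (ss f x) * H) := by
          rw [abs_mul, abs_mul, abs_of_nonneg hS0]
          gcongr
          · exact hb i
          · exact hd i
      _ = 5 * ss f x * H := by nlinarith [hsq]
  calc |∑ i, fderiv ℝ (gg f i) x (ee i)| ≤ ∑ i, |fderiv ℝ (gg f i) x (ee i)| :=
        Finset.abs_sum_le_sum_abs _ _
    _ ≤ ∑ _i : Fin 2, 5 * ss f x * H := Finset.sum_le_sum fun i _ => key i
    _ = 10 * ss f x * H := by simp [Fin.sum_univ_two]; ring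

lemma ibp (hf : ContDiff ℝ (⊤ : ℕ∞) f) (h2f : HasCompactSupport f) (i : Fin 2) :
    ∫ x, dd f i x * gg f i x = ∫ x, (-(fderiv ℝ (gg f i) x (ee i))) * f x := by
  obtain ⟨C, hC⟩ := ContDiff.lipschitzWith_of_hasCompactSupport h2f hf (by simp)
  obtain ⟨D, hD⟩ := ContDiff.lipschitzWith_of_hasCompactSupport (gg_supp h2f i) (gg_cd hf i) (by simp)
  have h := hC.integral_lineDeriv_mul_eq (μ := volume) hD (gg_supp h2f i) (ee i)
  have h1 : ∀ x, lineDeriv ℝ f x (ee i) = dd f i x := fun x =>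
    ((hf.differentiable (by simp)) x).lineDeriv_eq_fderiv
  have h2 : ∀ x, lineDeriv ℝ (gg f i) x (-(ee i)) = -(fderiv ℝ (gg f i) x (ee i)) := by
    intro x
    rw [(((gg_cd hf i).differentiable (by simp)) x).lineDeriv_eq_fderiv, map_neg]
  simp_rw [h1, h2] at h
  exact h

lemma integral_ss_sq (hf : ContDiff ℝ (⊤ : ℕ∞) f) (h2f : HasCompactSupport f) {M : ℝ}
    (hM : ∀ᵐ x : E2, |f x| ≤ M) (hM0 : 0 ≤ M) :
    ∫ x, ss f x ^ 2 ≤ 10 * M * ∫ x, ss f x * ‖iteratedFDeriv ℝ 2 f x‖ := by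
  have hcont_dg : ∀ i : Fin 2, Continuous fun x => dd f i x * gg f i x :=
    fun i => (((dd_cd hf i).continuous).mul ((gg_cd hf i).continuous))
  have hsupp_dg : ∀ i : Fin 2, HasCompactSupport fun x => dd f i x * gg f i x :=
    fun i => (gg_supp h2f i).mul_left
  have hint_dg : ∀ i : Fin 2, Integrable fun x => dd f i x * gg f i x :=
    fun i => (hcont_dg i).integrable_of_hasCompactSupport (hsupp_dg i)
  -- step 1 : ∫ ss^2 = ∑ i, ∫ dd i * gg i
  have step1 : ∫ x, ss f x ^ 2 = ∑ i : Fin 2, ∫ x, dd f i x * gg f i x := by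
    rw [← integral_finset_sum _ fun i _ => hint_dg i]
    congr 1
    ext x
    simp only [gg, ss, Fin.sum_univ_two]
    ring
  -- step 2 : IBP on each term, summed
  have step2 : ∫ x, ss f x ^ 2 = ∫ x, (∑ i, -(fderiv ℝ (gg f i) x (ee i))) * f x := by
    rw [step1]
    have : ∀ i : Fin 2, ∫ x, dd f i x * gg f i x
        = ∫ x, (-(fderiv ℝ (gg f i) x (ee i))) * f x := fun i => ibp hf h2f i
    simp_rw [this]
    rw [← integral_finset_sum]
    · congr 1; ext x; rw [← Finset.sum_mul]
    · intro i _
      have hcont : Continuous fun x => (-(fderiv ℝ (gg f i) x (ee i))) * f x := by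
        have hdg : Continuous fun x => fderiv ℝ (gg f i) x (ee i) :=
          (((gg_cd hf i).fderiv_right (m := (⊤ : ℕ∞)) (by simp)).continuous.clm_apply continuous_const)
        exact hdg.neg.mul hf.continuous
      exact hcont.integrable_of_hasCompactSupport (h2f.mul_left)
  -- step 3 : bound the integrand
  have hcontH : Continuous fun x : E2 => ‖iteratedFDeriv ℝ 2 f x‖ :=
    (hf.continuous_iteratedFDeriv (WithTop.coe_le_coe.mpr le_top)).norm
  have hsuppH : HasCompactSupport fun x : E2 => ‖iteratedFDeriv ℝ 2 f x‖ :=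
    (h2f.iteratedFDeriv 2).norm
  have hintSH : Integrable fun x : E2 => ss f x * ‖iteratedFDeriv ℝ 2 f x‖ :=
    ((ss_cd hf).continuous.mul hcontH).integrable_of_hasCompactSupport hsuppH.mul_left
  rw [step2]
  calc ∫ x, (∑ i, -(fderiv ℝ (gg f i) x (ee i))) * f x
      ≤ ∫ x, 10 * M * (ss f x * ‖iteratedFDeriv ℝ 2 f x‖) := by
        apply integral_mono_ae ?_ (hintSH.const_mul _)
        · filter_upwards [hM] with x hx
          calc (∑ i, -(fderiv ℝ (gg f i) x (ee i))) * f x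
              ≤ |(∑ i, -(fderiv ℝ (gg f i) x (ee i))) * f x| := le_abs_self _
            _ = |∑ i, -(fderiv ℝ (gg f i) x (ee i))| * |f x| := abs_mul _ _
            _ ≤ (10 * ss f x * ‖iteratedFDeriv ℝ 2 f x‖) * M := by
                have h0 := ss_nonneg (f := f) x
                apply mul_le_mul ?_ hx (abs_nonneg _) (by positivity)
                · have := div_bound hf x
                  calc |∑ i, -(fderiv ℝ (gg f i) x (ee i))|
                      = |∑ i, fderiv ℝ (gg f i) x (ee i)| := by
                        rw [Finset.sum_neg_distrib, abs_neg]
                    _ ≤ _ := this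
            _ = 10 * M * (ss f x * ‖iteratedFDeriv ℝ 2 f x‖) := by ring
        · have hcont : Continuous fun x => (∑ i, -(fderiv ℝ (gg f i) x (ee i))) * f x := by
            have : ∀ i : Fin 2, Continuous fun x => fderiv ℝ (gg f i) x (ee i) := fun i =>
              (((gg_cd hf i).fderiv_right (m := (⊤ : ℕ∞)) (by simp)).continuous.clm_apply continuous_const)
            exact (continuous_finset_sum _ fun i _ => (this i).neg).mul hf.continuous
          exact hcont.integrable_of_hasCompactSupport h2f.mul_left
    _ = 10 * M * ∫ x, ss f x * ‖iteratedFDeriv ℝ 2 f x‖ := integral_const_mul _ _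

theorem main (hf : ContDiff ℝ (⊤ : ℕ∞) f) (h2f : HasCompactSupport f) :
    eLpNorm (fun x => ‖fderiv ℝ f x‖) 4 volume ^ 2 ≤
      ENNReal.ofReal 10 * (eLpNorm f ⊤ volume *
        eLpNorm (fun x => ‖iteratedFDeriv ℝ 2 f x‖) 2 volume) := by
  set Hf : E2 → ℝ := fun x => ‖iteratedFDeriv ℝ 2 f x‖ with hHf
  have hcontH : Continuous Hf := (hf.continuous_iteratedFDeriv (WithTop.coe_le_coe.mpr le_top)).norm
  have hsuppH : HasCompactSupport Hf := (h2f.iteratedFDeriv 2).norm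
  set I : ℝ := ∫ x, ss f x ^ 2 with hI
  set A : ℝ := ∫ x, Hf x ^ 2 with hA
  have hI0 : 0 ≤ I := integral_nonneg fun x => sq_nonneg _
  have hA0 : 0 ≤ A := integral_nonneg fun x => sq_nonneg _
  -- the essential sup
  have hftop : MemLp f ⊤ volume := hf.continuous.memLp_of_hasCompactSupport h2f
  have hne : eLpNorm f ⊤ volume ≠ ⊤ := hftop.2.ne
  set M : ℝ := (eLpNorm f ⊤ volume).toReal with hMdef
  have hM0 : 0 ≤ M := ENNReal.toReal_nonneg
  have hMae : ∀ᵐ x : E2, |f x| ≤ M := by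
    filter_upwards [ae_le_eLpNormEssSup (f := f) (μ := volume)] with x hx
    have h1 : (‖f x‖₊ : ℝ≥0∞) ≤ eLpNorm f ⊤ volume := by
      rwa [eLpNorm_exponent_top]
    have := ENNReal.toReal_mono hne h1
    simpa [Real.norm_eq_abs, hMdef] using this
  -- Cauchy–Schwarz
  have hsMem : MemLp (ss f) (ENNReal.ofReal 2) volume := by
    rw [show ENNReal.ofReal 2 = 2 by norm_num]
    exact (ss_cd hf).continuous.memLp_of_hasCompactSupport (ss_supp h2f)
  have hHMem : MemLp Hf (ENNReal.ofReal 2) volume := by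
    rw [show ENNReal.ofReal 2 = 2 by norm_num]
    exact hcontH.memLp_of_hasCompactSupport hsuppH
  have CS : ∫ x, ss f x * Hf x ≤ I ^ (1/2 : ℝ) * A ^ (1/2 : ℝ) := by
    have := integral_mul_le_Lp_mul_Lq_of_nonneg (μ := volume)
      Real.HolderConjugate.two_two (Filter.Eventually.of_forall fun x => ss_nonneg x)
      (Filter.Eventually.of_forall fun x => norm_nonneg _) hsMem hHMem
    simp only [Real.rpow_two] at this
    convert this using 2 <;> norm_num
  have chain : I ≤ 10 * M * (I ^ (1/2 : ℝ) * A ^ (1/2 : ℝ)) := by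
    calc I ≤ 10 * M * ∫ x, ss f x * Hf x := integral_ss_sq hf h2f hMae hM0
      _ ≤ 10 * M * (I ^ (1/2 : ℝ) * A ^ (1/2 : ℝ)) :=
        mul_le_mul_of_nonneg_left CS (by positivity)
  have key : Real.sqrt I ≤ 10 * M * Real.sqrt A := by
    rcases eq_or_lt_of_le hI0 with h0 | hIpos
    · rw [← h0, Real.sqrt_zero]
      positivity
    · have hsI : 0 < Real.sqrt I := Real.sqrt_pos.2 hIpos
      rw [← Real.sqrt_eq_rpow, ← Real.sqrt_eq_rpow] at chain
      have h2 : Real.sqrt I * Real.sqrt I ≤ (10 * M * Real.sqrt A) * Real.sqrt I := by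
        nlinarith [Real.mul_self_sqrt hI0]
      exact le_of_mul_le_mul_right h2 hsI
  -- eLpNorm conversions
  have hLHS : eLpNorm (fun x => ‖fderiv ℝ f x‖) 4 volume ≤ ENNReal.ofReal (I ^ ((4:ℝ)⁻¹)) := by
    have hmono : eLpNorm (fun x => ‖fderiv ℝ f x‖) 4 volume
        ≤ eLpNorm (fun x => Real.sqrt (ss f x)) 4 volume := by
      apply eLpNorm_mono
      intro x
      rw [norm_norm, Real.norm_eq_abs, abs_of_nonneg (Real.sqrt_nonneg _)]
      have h1 : ‖fderiv ℝ f x‖ ^ 2 ≤ ss f x := norm_clm_sq_le (fderiv ℝ f x)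
      exact (Real.le_sqrt (norm_nonneg _) (ss_nonneg x)).2 h1
    have hmem : MemLp (fun x => Real.sqrt (ss f x)) 4 volume :=
      (Real.continuous_sqrt.comp (ss_cd hf).continuous).memLp_of_hasCompactSupport
        ((ss_supp h2f).comp_left (g := Real.sqrt) Real.sqrt_zero)
    rw [hmem.eLpNorm_eq_integral_rpow_norm (by norm_num) (by norm_num)] at hmono
    refine hmono.trans (le_of_eq ?_)
    congr 1
    have hpt : ∀ x : E2, ‖Real.sqrt (ss f x)‖ ^ ((4:ℝ≥0∞).toReal) = ss f x ^ 2 := by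
      intro x
      rw [Real.norm_eq_abs, abs_of_nonneg (Real.sqrt_nonneg _),
        show ((4:ℝ≥0∞).toReal) = ((4:ℕ):ℝ) by norm_num, Real.rpow_natCast,
        show (4:ℕ) = 2 * 2 from rfl, pow_mul, Real.sq_sqrt (ss_nonneg x)]
    simp_rw [hpt]
    rw [← hI]
    norm_num
  have hLHS2 : eLpNorm (fun x => ‖fderiv ℝ f x‖) 4 volume ^ 2
      ≤ ENNReal.ofReal (Real.sqrt I) := by
    calc eLpNorm (fun x => ‖fderiv ℝ f x‖) 4 volume ^ 2
        ≤ (ENNReal.ofReal (I ^ ((4:ℝ)⁻¹))) ^ 2 := by gcongr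
      _ = ENNReal.ofReal ((I ^ ((4:ℝ)⁻¹)) ^ 2) := (ENNReal.ofReal_pow (by positivity) 2).symm
      _ = ENNReal.ofReal (Real.sqrt I) := by
          congr 1
          rw [← Real.rpow_natCast (I ^ ((4:ℝ)⁻¹)) 2, ← Real.rpow_mul hI0, Real.sqrt_eq_rpow]
          norm_num
  have hRHS_H : eLpNorm Hf 2 volume = ENNReal.ofReal (Real.sqrt A) := by
    have hmem : MemLp Hf 2 volume := hcontH.memLp_of_hasCompactSupport hsuppH
    rw [hmem.eLpNorm_eq_integral_rpow_norm (by norm_num) (by norm_num)]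
    congr 1
    have hpt : ∀ x : E2, ‖Hf x‖ ^ ((2:ℝ≥0∞).toReal) = Hf x ^ 2 := by
      intro x
      rw [Real.norm_eq_abs, abs_of_nonneg (norm_nonneg _),
        show ((2:ℝ≥0∞).toReal) = ((2:ℕ):ℝ) by norm_num, Real.rpow_natCast]
    simp_rw [hpt]
    rw [← hA, Real.sqrt_eq_rpow]
    norm_num
  calc eLpNorm (fun x => ‖fderiv ℝ f x‖) 4 volume ^ 2
      ≤ ENNReal.ofReal (Real.sqrt I) := hLHS2
    _ ≤ ENNReal.ofReal (10 * M * Real.sqrt A) := ENNReal.ofReal_le_ofReal key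
    _ = ENNReal.ofReal 10 * (eLpNorm f ⊤ volume * eLpNorm Hf 2 volume) := by
        rw [show (10:ℝ) * M * Real.sqrt A = 10 * (M * Real.sqrt A) by ring,
          ENNReal.ofReal_mul (by norm_num), ENNReal.ofReal_mul hM0, hRHS_H,
          ENNReal.ofReal_toReal hne]

end GNaux
end

/-- Gagliardo–Nirenberg-type inequality in the plane: there exists `C > 0` such that for
every smooth compactly supported `f : ℝ² → ℝ`,
`‖∇f‖_{L⁴}² ≤ C·‖f‖_{L^∞}·‖∇²f‖_{L²}`. -/
theorem gagliardo_nirenberg_grad_L4 :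
    ∃ C : ℝ, 0 < C ∧ ∀ f : EuclideanSpace ℝ (Fin 2) → ℝ,
      ContDiff ℝ (⊤ : ℕ∞) f → HasCompactSupport f →
      eLpNorm (fun x => ‖fderiv ℝ f x‖) 4 volume ^ 2 ≤
        ENNReal.ofReal C * (eLpNorm f ⊤ volume *
          eLpNorm (fun x => ‖iteratedFDeriv ℝ 2 f x‖) 2 volume) := by
  exact ⟨10, by norm_num, fun f hf h2f => GNaux.main hf h2f⟩
end
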